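/- Let n, k, d ∈ ℕ with k ≤ 2^n, and let S ⊆ {0,1}^n be a contiguous set of size k that is disjoint from M(k), the set of k lexicographically smallest strings. Then the number of strings of Hamming weight ≤ d−1 in M(k) is at least the number of strings of Hamming weight ≤ d in S. -/

import Mathlib

/-- The value of a binary string of length `n`, first coordinate most significant.
Comparing values is exactly the lexicographic order on `{0,1}^n`. -/
def valB {n : ℕ} (x : Fin n → Fin 2) : ℕ := ∑ i, (x i : ℕ) * 2 ^ (n - 1 - (i : ℕ))

/-!
Via `valB`, strings are numbers in `[0, 2^n)` and Hamming weight is the binary digit sum. Write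
`F d m` for the number of `v < m` of digit sum `< d`. Splitting `[0, m)` into evens and odds gives
`F d (2m) = F d m + F (d-1) m` and `F d (2m+1) = F d (m+1) + F (d-1) m`, and with these the
inequality `F d (a + k) ≤ F d a + F (d-1) k` for `k ≤ a` follows by strong induction on `a`,
simultaneously for all `d`: halve `a` and `k` and apply the induction hypothesis at levels `d`
and `d - 1`. Disjointness from `M(k)` forces `k ≤ a`, and then
`F (d+1) (a + k) - F (d+1) a ≤ F d k` is the claim.
-/

open Finset

def popcount (v : ℕ) : ℕ := (Nat.digits 2 v).sum

lemma popcount_add_two_mul {b : ℕ} (hb : b < 2) (m : ℕ) :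
    popcount (b + 2 * m) = b + popcount m := by
  by_cases h : b ≠ 0 ∨ m ≠ 0
  · rw [popcount, Nat.digits_add 2 one_lt_two b m hb h, List.sum_cons, popcount]
  · obtain ⟨rfl, rfl⟩ : b = 0 ∧ m = 0 := by tauto
    rfl

lemma popcount_two_mul (m : ℕ) : popcount (2 * m) = popcount m := by
  simpa using popcount_add_two_mul two_pos m

lemma popcount_two_mul_add_one (m : ℕ) : popcount (2 * m + 1) = popcount m + 1 := by
  rw [add_comm, popcount_add_two_mul one_lt_two, add_comm]

def lowWeightCount (d m : ℕ) : ℕ := #{v ∈ range m | popcount v < d}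

lemma lowWeightCount_succ (d m : ℕ) :
    lowWeightCount d (m + 1) = lowWeightCount d m + if popcount m < d then 1 else 0 := by
  simp only [lowWeightCount, card_filter, sum_range_succ]

lemma lowWeightCount_two_mul (d m : ℕ) :
    lowWeightCount d (2 * m) = lowWeightCount d m + lowWeightCount (d - 1) m := by
  induction m with
  | zero => rfl
  | succ m ih =>
    rw [show 2 * (m + 1) = 2 * m + 1 + 1 by ring, lowWeightCount_succ, lowWeightCount_succ, ih,
      popcount_two_mul, popcount_two_mul_add_one, lowWeightCount_succ, lowWeightCount_succ]
    split_ifs <;> omega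

lemma lowWeightCount_two_mul_add_one (d m : ℕ) :
    lowWeightCount d (2 * m + 1) = lowWeightCount d (m + 1) + lowWeightCount (d - 1) m := by
  rw [lowWeightCount_succ, lowWeightCount_two_mul, popcount_two_mul, lowWeightCount_succ]
  ring

lemma lowWeightCount_mono_left {d d' : ℕ} (h : d ≤ d') (m : ℕ) :
    lowWeightCount d m ≤ lowWeightCount d' m :=
  card_le_card <| monotone_filter_right _ fun _ _ hv => hv.trans_le h

lemma lowWeightCount_pred_succ_add_le (d m : ℕ) :
    lowWeightCount (d - 1) (m + 1) + lowWeightCount d m ≤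
      lowWeightCount d (m + 1) + lowWeightCount (d - 1) m := by
  rw [lowWeightCount_succ, lowWeightCount_succ]
  split_ifs <;> omega

/- `d - 1` truncates at `d = 0`, where both sides are `0`; this keeps the halving identities, and
hence the induction, uniform in `d`. -/
theorem lowWeightCount_add_le {a k : ℕ} (hka : k ≤ a) (d : ℕ) :
    lowWeightCount d (a + k) ≤ lowWeightCount d a + lowWeightCount (d - 1) k := by
  induction a using Nat.strong_induction_on generalizing k d with
  | _ a ih =>
  rcases Nat.eq_zero_or_pos k with rfl | hk0
  · simp [lowWeightCount]
  rcases hka.eq_or_lt with rfl | hka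
  · rw [← two_mul, lowWeightCount_two_mul]
  obtain ⟨p, rfl | rfl⟩ := Nat.even_or_odd' a <;> obtain ⟨q, rfl | rfl⟩ := Nat.even_or_odd' k
  · have h1 := ih p (by omega) (k := q) (by omega) d
    have h2 := ih p (by omega) (k := q) (by omega) (d - 1)
    rw [← mul_add, lowWeightCount_two_mul, lowWeightCount_two_mul, lowWeightCount_two_mul]
    omega
  · have h1 := ih p (by omega) (k := q + 1) (by omega) d
    have h2 := ih p (by omega) (k := q) (by omega) (d - 1)
    rw [show 2 * p + (2 * q + 1) = 2 * (p + q) + 1 by ring, lowWeightCount_two_mul_add_one,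
      lowWeightCount_two_mul, lowWeightCount_two_mul_add_one]
    rw [← add_assoc] at h1
    omega
  · have h1 := ih (p + 1) (by omega) (k := q) (by omega) d
    have h2 := ih p (by omega) (k := q) (by omega) (d - 1)
    rw [show 2 * p + 1 + 2 * q = 2 * (p + q) + 1 by ring, lowWeightCount_two_mul_add_one,
      lowWeightCount_two_mul_add_one, lowWeightCount_two_mul]
    rw [add_right_comm] at h1
    omega
  · have h1 := ih (p + 1) (by omega) (k := q) (by omega) d
    have h2 := ih p (by omega) (k := q + 1) (by omega) (d - 1)
    have h3 := lowWeightCount_pred_succ_add_le (d - 1) q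
    rw [show 2 * p + 1 + (2 * q + 1) = 2 * (p + q + 1) by ring, lowWeightCount_two_mul,
      lowWeightCount_two_mul_add_one, lowWeightCount_two_mul_add_one]
    rw [add_right_comm] at h1
    rw [← add_assoc] at h2
    omega

lemma lowWeightCount_add (d a k : ℕ) :
    lowWeightCount d (a + k) = lowWeightCount d a + #{v ∈ Ico a (a + k) | popcount v < d} := by
  simp only [lowWeightCount, card_filter]
  exact (sum_range_add_sum_Ico _ (Nat.le_add_right a k)).symm

theorem card_filter_Ico_popcount_le {a k : ℕ} (hka : k ≤ a) (d : ℕ) :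
    #{v ∈ Ico a (a + k) | popcount v ≤ d} ≤ lowWeightCount d k := by
  have h := lowWeightCount_add_le hka (d + 1)
  rw [lowWeightCount_add, add_tsub_cancel_right] at h
  simpa only [Nat.lt_succ_iff] using Nat.le_of_add_le_add_left h

section Strings

variable {n : ℕ}

lemma valB_eq_finFunctionFinEquiv (x : Fin n → Fin 2) :
    valB x = finFunctionFinEquiv (fun i => x i.rev) := by
  rw [finFunctionFinEquiv_apply, valB, ← Equiv.sum_comp Fin.revPerm]
  refine sum_congr rfl fun i _ => ?_
  simp only [Fin.revPerm_apply, Fin.val_rev]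
  congr 2
  omega

lemma valB_injective : Function.Injective (valB (n := n)) := by
  intro x y h
  simp only [valB_eq_finFunctionFinEquiv, Fin.val_inj, EmbeddingLike.apply_eq_iff_eq] at h
  funext i
  simpa using congrFun h i.rev

lemma valB_lt (x : Fin n → Fin 2) : valB x < 2 ^ n := by
  rw [valB_eq_finFunctionFinEquiv]
  exact Fin.isLt _

lemma exists_valB_eq {v : ℕ} (hv : v < 2 ^ n) : ∃ x : Fin n → Fin 2, valB x = v :=
  ⟨fun i => finFunctionFinEquiv.symm ⟨v, hv⟩ i.rev, by simp [valB_eq_finFunctionFinEquiv]⟩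

lemma image_valB_univ : (univ : Finset (Fin n → Fin 2)).image valB = range (2 ^ n) := by
  ext v
  simp only [mem_image, mem_univ, true_and, mem_range]
  exact ⟨fun ⟨x, hx⟩ => hx ▸ valB_lt x, exists_valB_eq⟩

lemma card_filter_valB (P : ℕ → Prop) [DecidablePred P] :
    #{x : Fin n → Fin 2 | P (valB x)} = #{v ∈ range (2 ^ n) | P v} := by
  rw [← image_valB_univ, filter_image, card_image_of_injective _ valB_injective]

lemma popcount_sum_mul_two_pow (f : Fin n → Fin 2) :
    popcount (∑ i, (f i : ℕ) * 2 ^ (i : ℕ)) = ∑ i, (f i : ℕ) := by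
  induction n with
  | zero => rfl
  | succ n ih =>
    have htail : ∑ i : Fin n, (f i.succ : ℕ) * 2 ^ (i.succ : ℕ) =
        2 * ∑ i : Fin n, (f i.succ : ℕ) * 2 ^ (i : ℕ) := by
      rw [mul_sum]
      exact sum_congr rfl fun i _ => by rw [Fin.val_succ, pow_succ]; ring
    rw [Fin.sum_univ_succ, Fin.val_zero, pow_zero, mul_one, htail,
      popcount_add_two_mul (f 0).isLt, ih, Fin.sum_univ_succ]

lemma popcount_valB (x : Fin n → Fin 2) : popcount (valB x) = ∑ i, (x i : ℕ) := by
  rw [valB_eq_finFunctionFinEquiv, finFunctionFinEquiv_apply, popcount_sum_mul_two_pow]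
  exact Equiv.sum_comp Fin.revPerm (fun i => (x i : ℕ))

end Strings

theorem stmt6_general (n k d a : ℕ) (ha : a + k ≤ 2 ^ n)
    (S : Finset (Fin n → Fin 2))
    (hS : S = Finset.univ.filter (fun x => a ≤ valB x ∧ valB x < a + k))
    (hdisj : Disjoint S (Finset.univ.filter (fun x : Fin n → Fin 2 => valB x < k))) :
    (S.filter (fun x => (∑ i, (x i : ℕ)) ≤ d)).card ≤
      ((Finset.univ.filter (fun x : Fin n → Fin 2 => valB x < k)).filter
        (fun x => (∑ i, (x i : ℕ)) ≤ d - 1)).card := by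
  subst hS
  have hka : k ≤ a := by
    by_contra! hak
    obtain ⟨x, hx⟩ := exists_valB_eq (n := n) (v := a) (by omega)
    refine disjoint_left.mp hdisj (show x ∈ _ by simp [hx]; omega) ?_
    simp [hx, hak]
  simp only [filter_filter, ← popcount_valB]
  rw [card_filter_valB (fun v => (a ≤ v ∧ v < a + k) ∧ popcount v ≤ d),
    card_filter_valB (fun v => v < k ∧ popcount v ≤ d - 1)]
  have hwindow : {v ∈ range (2 ^ n) | (a ≤ v ∧ v < a + k) ∧ popcount v ≤ d} =
      {v ∈ Ico a (a + k) | popcount v ≤ d} := by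
    ext v; simp only [mem_filter, mem_range, mem_Ico]; omega
  have hprefix : {v ∈ range (2 ^ n) | v < k ∧ popcount v ≤ d - 1} =
      {v ∈ range k | popcount v < d - 1 + 1} := by
    ext v; simp only [mem_filter, mem_range]; omega
  rw [hwindow, hprefix]
  exact (card_filter_Ico_popcount_le hka d).trans (lowWeightCount_mono_left (by omega) k)

/-- If `S ⊆ {0,1}^n` is a contiguous set of size `k` disjoint from the set `M(k)`
of the `k` lexicographically smallest strings, then the number of strings of
Hamming weight `≤ d − 1` in `M(k)` is at least the number of strings of
Hamming weight `≤ d` in `S`. -/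
theorem stmt6 (n k d a : ℕ) (hk : k ≤ 2 ^ n) (ha : a + k ≤ 2 ^ n)
    (S : Finset (Fin n → Fin 2))
    (hS : S = Finset.univ.filter (fun x => a ≤ valB x ∧ valB x < a + k))
    (hdisj : Disjoint S (Finset.univ.filter (fun x : Fin n → Fin 2 => valB x < k))) :
    (S.filter (fun x => (∑ i, (x i : ℕ)) ≤ d)).card ≤
      ((Finset.univ.filter (fun x : Fin n → Fin 2 => valB x < k)).filter
        (fun x => (∑ i, (x i : ℕ)) ≤ d - 1)).card :=
  stmt6_general n k d a ha S hS hdisj
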